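/- Let M : ℝⁿ → ℝᵐ be surjective linear, h : ℝⁿ → ℝ continuously differentiable, and P : ℝᵐ → (−∞,∞] proper closed. Suppose sequences xᵗ → x*, yᵗ → y*, zᵗ → z* satisfy: (a) −zᵗ⁺¹ − βM(xᵗ⁺¹ − xᵗ) ∈ ∂P(yᵗ⁺¹), (b) ∇h(xᵗ⁺¹) − M* zᵗ⁺¹ = −∇φ(xᵗ⁺¹) + ∇φ(xᵗ) for a C¹ function φ, (c) M xᵗ⁺¹ − yᵗ⁺¹ = (1/β)(zᵗ − zᵗ⁺¹), with ‖xᵗ⁺¹ − xᵗ‖ + ‖zᵗ⁺¹ − zᵗ‖ → 0 and P(yᵗ⁺¹) → P(y*). Then ∇h(x*) = M* z*, −z* ∈ ∂P(y*), and y* = M x*; in particular 0 ∈ ∇h(x*) + M* ∂P(M x*). -/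
import Mathlib


open scoped RealInnerProductSpace

/-- `v` is a Fréchet (regular) subgradient of `f` at `x`. -/
def FrechetSubgradient {m : ℕ} (f : EuclideanSpace ℝ (Fin m) → EReal)
    (x v : EuclideanSpace ℝ (Fin m)) : Prop :=
  f x ≠ ⊤ ∧ f x ≠ ⊥ ∧
    ∀ ε : ℝ, 0 < ε → ∀ᶠ z in nhds x, f x + ((⟪v, z - x⟫ - ε * ‖z - x‖ : ℝ) : EReal) ≤ f z

/-- `v` belongs to the limiting (Mordukhovich) subdifferential of `f` at `x`. -/
def LimitingSubgradient {m : ℕ} (f : EuclideanSpace ℝ (Fin m) → EReal)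
    (x v : EuclideanSpace ℝ (Fin m)) : Prop :=
  ∃ (xs vs : ℕ → EuclideanSpace ℝ (Fin m)),
    Filter.Tendsto xs Filter.atTop (nhds x) ∧
    Filter.Tendsto (fun t => f (xs t)) Filter.atTop (nhds (f x)) ∧
    Filter.Tendsto vs Filter.atTop (nhds v) ∧
    ∀ t, FrechetSubgradient f (xs t) (vs t)

/-- Cluster points of sequences satisfying the proximal-ADMM optimality relations are
stationary: under (a)–(c) with vanishing successive changes and `P(yᵗ⁺¹) → P(y*)`, the
limit satisfies `∇h(x*) = M* z*`, `−z* ∈ ∂P(y*)`, `y* = M x*`, and hence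
`0 ∈ ∇h(x*) + M* ∂P(M x*)`. -/
theorem admm_cluster_point_stationary {n m : ℕ}
    (M : EuclideanSpace ℝ (Fin n) →L[ℝ] EuclideanSpace ℝ (Fin m))
    (hMsurj : Function.Surjective M)
    (h φ : EuclideanSpace ℝ (Fin n) → ℝ)
    (gradh gradφ : EuclideanSpace ℝ (Fin n) → EuclideanSpace ℝ (Fin n))
    (hgradh : ∀ w, HasGradientAt h (gradh w) w) (hgradhc : Continuous gradh)
    (hgradφ : ∀ w, HasGradientAt φ (gradφ w) w) (hgradφc : Continuous gradφ)
    (P : EuclideanSpace ℝ (Fin m) → EReal)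
    (hProper : ∃ y, P y ≠ ⊤) (hNoBot : ∀ y, P y ≠ ⊥) (hlsc : LowerSemicontinuous P)
    (β : ℝ) (hβ : 0 < β)
    (x : ℕ → EuclideanSpace ℝ (Fin n)) (y z : ℕ → EuclideanSpace ℝ (Fin m))
    (xstar : EuclideanSpace ℝ (Fin n)) (ystar zstar : EuclideanSpace ℝ (Fin m))
    (hxconv : Filter.Tendsto x Filter.atTop (nhds xstar))
    (hyconv : Filter.Tendsto y Filter.atTop (nhds ystar))
    (hzconv : Filter.Tendsto z Filter.atTop (nhds zstar))
    -- (a)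
    (ha : ∀ t, LimitingSubgradient P (y (t + 1))
      (-(z (t + 1)) - β • (M (x (t + 1) - x t))))
    -- (b)
    (hb : ∀ t, gradh (x (t + 1)) - (ContinuousLinearMap.adjoint M) (z (t + 1)) =
      -(gradφ (x (t + 1))) + gradφ (x t))
    -- (c)
    (hc : ∀ t, M (x (t + 1)) - y (t + 1) = β⁻¹ • (z t - z (t + 1)))
    (hvanish : Filter.Tendsto
      (fun t => ‖x (t + 1) - x t‖ + ‖z (t + 1) - z t‖) Filter.atTop (nhds 0))
    (hPconv : Filter.Tendsto (fun t => P (y (t + 1))) Filter.atTop (nhds (P ystar))) :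
    gradh xstar = (ContinuousLinearMap.adjoint M) zstar ∧
    LimitingSubgradient P ystar (-zstar) ∧
    ystar = M xstar ∧
    ∃ v, LimitingSubgradient P (M xstar) v ∧
      gradh xstar + (ContinuousLinearMap.adjoint M) v = 0 := by

  letI : MetricSpace EReal := TopologicalSpace.metrizableSpaceMetric EReal
  -- shifted sequences
  have hshift := Filter.tendsto_add_atTop_nat 1
  have hx1 : Filter.Tendsto (fun t => x (t + 1)) Filter.atTop (nhds xstar) :=
    hxconv.comp hshift
  have hy1 : Filter.Tendsto (fun t => y (t + 1)) Filter.atTop (nhds ystar) :=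
    hyconv.comp hshift
  have hz1 : Filter.Tendsto (fun t => z (t + 1)) Filter.atTop (nhds zstar) :=
    hzconv.comp hshift
  -- successive differences vanish
  have hxd : Filter.Tendsto (fun t => ‖x (t + 1) - x t‖) Filter.atTop (nhds 0) :=
    squeeze_zero (fun t => norm_nonneg _)
      (fun t => le_add_of_nonneg_right (norm_nonneg _)) hvanish
  have hzd : Filter.Tendsto (fun t => ‖z (t + 1) - z t‖) Filter.atTop (nhds 0) :=
    squeeze_zero (fun t => norm_nonneg _)
      (fun t => le_add_of_nonneg_left (norm_nonneg _)) hvanish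
  have hxd0 : Filter.Tendsto (fun t => x (t + 1) - x t) Filter.atTop (nhds 0) :=
    tendsto_zero_iff_norm_tendsto_zero.mpr hxd
  have hzd0 : Filter.Tendsto (fun t => z (t + 1) - z t) Filter.atTop (nhds 0) :=
    tendsto_zero_iff_norm_tendsto_zero.mpr hzd
  have hMx0 : Filter.Tendsto (fun t => M (x (t + 1) - x t)) Filter.atTop (nhds 0) := by
    have h0 := (M.continuous.tendsto 0).comp hxd0
    rw [map_zero] at h0
    exact h0
  -- (1) gradient equation in the limit
  have heq1 : gradh xstar = (ContinuousLinearMap.adjoint M) zstar := by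
    have hL : Filter.Tendsto
        (fun t => gradh (x (t + 1)) - (ContinuousLinearMap.adjoint M) (z (t + 1)))
        Filter.atTop (nhds (gradh xstar - (ContinuousLinearMap.adjoint M) zstar)) :=
      ((hgradhc.tendsto xstar).comp hx1).sub
        (((ContinuousLinearMap.adjoint M).continuous.tendsto zstar).comp hz1)
    have hR : Filter.Tendsto
        (fun t => -(gradφ (x (t + 1))) + gradφ (x t))
        Filter.atTop (nhds 0) := by
      have := (((hgradφc.tendsto xstar).comp hx1).neg).add ((hgradφc.tendsto xstar).comp hxconv)
      simpa using this
    have := tendsto_nhds_unique (hL.congr (fun t => (hb t))) hR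
    exact sub_eq_zero.mp this
  -- (2) ystar = M xstar
  have heq2 : ystar = M xstar := by
    have hL : Filter.Tendsto (fun t => M (x (t + 1)) - y (t + 1)) Filter.atTop
        (nhds (M xstar - ystar)) :=
      (((M.continuous.tendsto xstar).comp hx1)).sub hy1
    have hR : Filter.Tendsto (fun t => β⁻¹ • (z t - z (t + 1))) Filter.atTop (nhds 0) := by
      have h0 : Filter.Tendsto (fun t => z t - z (t + 1)) Filter.atTop (nhds 0) := by
        have := hzd0.neg; simpa using this
      have := h0.const_smul β⁻¹
      simpa using this
    have := tendsto_nhds_unique (hL.congr (fun t => (hc t))) hR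
    exact (sub_eq_zero.mp this).symm
  -- (3) limiting subgradient: diagonal argument
  have hv : Filter.Tendsto (fun t => -(z (t + 1)) - β • (M (x (t + 1) - x t)))
      Filter.atTop (nhds (-zstar)) := by
    have h1 : Filter.Tendsto (fun t => β • (M (x (t + 1) - x t))) Filter.atTop (nhds 0) := by
      have := hMx0.const_smul β; simpa using this
    have := (hz1.neg).sub h1
    simpa using this
  have hdiag : ∀ t : ℕ, ∃ (a b : EuclideanSpace ℝ (Fin m)),
      FrechetSubgradient P a b ∧ dist a (y (t + 1)) < 1 / (t + 1) ∧
      dist (P a) (P (y (t + 1))) < 1 / (t + 1) ∧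
      dist b (-(z (t + 1)) - β • (M (x (t + 1) - x t))) < 1 / (t + 1) := by
    intro t
    obtain ⟨ys, vs, hys, hPys, hvs, hF⟩ := ha t
    have hpos : (0 : ℝ) < 1 / (t + 1) := by positivity
    have e1 := (Metric.tendsto_nhds.mp hys) _ hpos
    have e2 := (Metric.tendsto_nhds.mp hPys) _ hpos
    have e3 := (Metric.tendsto_nhds.mp hvs) _ hpos
    obtain ⟨k, ⟨hk1, hk2⟩, hk3⟩ := ((e1.and e2).and e3).exists
    exact ⟨ys k, vs k, hF k, hk1, hk2, hk3⟩
  choose a b hFab ha1 ha2 ha3 using hdiag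
  have hone : Filter.Tendsto (fun t : ℕ => 1 / ((t : ℝ) + 1)) Filter.atTop (nhds 0) :=
    tendsto_one_div_add_atTop_nhds_zero_nat
  have hda : Filter.Tendsto (fun t => dist (y (t + 1)) (a t)) Filter.atTop (nhds 0) :=
    squeeze_zero (fun t => dist_nonneg)
      (fun t => by rw [dist_comm]; exact (ha1 t).le) hone
  have hdP : Filter.Tendsto (fun t => dist (P (y (t + 1))) (P (a t))) Filter.atTop (nhds 0) :=
    squeeze_zero (fun t => dist_nonneg)
      (fun t => by rw [dist_comm]; exact (ha2 t).le) hone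
  have hdb : Filter.Tendsto
      (fun t => dist (-(z (t + 1)) - β • (M (x (t + 1) - x t))) (b t))
      Filter.atTop (nhds 0) :=
    squeeze_zero (fun t => dist_nonneg)
      (fun t => by rw [dist_comm]; exact (ha3 t).le) hone
  have hlim : LimitingSubgradient P ystar (-zstar) :=
    ⟨a, b, hy1.congr_dist hda, hPconv.congr_dist hdP, hv.congr_dist hdb, hFab⟩
  refine ⟨heq1, hlim, heq2, -zstar, ?_, ?_⟩
  · rw [← heq2]; exact hlim
  · rw [heq1, ← map_add]
    simp
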